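/- arXiv:1705.04501 — 4 statements merged into one kernel-verified Lean document; each statement's English description precedes it below -/
import Mathlib

section
/- For every positive integer p there exists a constant K(p) > 0, depending only on p, with the following property: for every field K, every eps > 0, every unital K-algebra B equipped with a pseudo-rank function N, every unital von Neumann regular K-subalgebra A of B, and every K-algebra homomorphism rho : M_p(K) -> B such that for all 1 <= i, j <= p there exists a in A with N(rho(e_ij) - a) < eps (where e_ij are the canonical matrix units of M_p(K)), there exists a K-algebra homomorphism psi : M_p(K) -> A with N(rho(e_ij) - psi(e_ij)) < K(p) * eps for all 1 <= i, j <= p. -/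
/-!
Lift the diagonal matrix units one at a time: inside the corner of `A` orthogonal to the
idempotents already built, a regular element `x = x y x` close to `e i i` yields the idempotent
`x y + x (1 - x y)` of `A`, which lies within `N (x² - x)` of `x`. This gives orthogonal
idempotents `g i ∈ A` close to `e i i`. Then fix `i₀` and shrink an idempotent `f ≤ g i₀`: for
each `j`, the element `b = g j * a * f` with `a ∈ A` close to `e j i₀` has a reflexive inverse
`t ∈ A`, and replacing `f` by `t b` makes `b`, `t` witness `f ≾ g j`. The pseudo-rank of a
difference of comparable idempotents is the difference of their ranks, and `N b` is close to the
common rank of the matrix units, so each step loses only `O(ε)` rank. Once `c j`, `d j` witness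
`f ≾ g j` for every `j`, the products `c i * d j` are matrix units in `A` close to `e i j`.
-/

open scoped TensorProduct Kronecker

noncomputable section

namespace AraClaramunt

/-! ### Pseudo-rank functions and rank metric notions -/

/-- A pseudo-rank function on a unital ring. -/
structure IsPseudoRankFunction {R : Type*} [Ring R] (N : R → ℝ) : Prop where
  nonneg : ∀ x : R, 0 ≤ N x
  le_one : ∀ x : R, N x ≤ 1
  map_one : N 1 = 1
  subadditive : ∀ a b : R, N (a + b) ≤ N a + N b
  mul_le_left : ∀ a b : R, N (a * b) ≤ N a
  mul_le_right : ∀ a b : R, N (a * b) ≤ N b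
  add_of_orthogonal : ∀ e f : R, IsIdempotentElem e → IsIdempotentElem f →
    e * f = 0 → f * e = 0 → N (e + f) = N e + N f

/-- A rank function is a faithful pseudo-rank function. -/
def IsRankFunction {R : Type*} [Ring R] (N : R → ℝ) : Prop :=
  IsPseudoRankFunction N ∧ ∀ x : R, N x = 0 → x = 0

/-- Cauchy sequence for the pseudo-metric `d(x,y) = N (x - y)`. -/
def RankCauchy {R : Type*} [Ring R] (N : R → ℝ) (u : ℕ → R) : Prop :=
  ∀ ε : ℝ, 0 < ε → ∃ n₀ : ℕ, ∀ m n : ℕ, n₀ ≤ m → n₀ ≤ n → N (u m - u n) < ε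

/-- Convergence for the pseudo-metric `d(x,y) = N (x - y)`. -/
def RankTendsto {R : Type*} [Ring R] (N : R → ℝ) (u : ℕ → R) (x : R) : Prop :=
  ∀ ε : ℝ, 0 < ε → ∃ n₀ : ℕ, ∀ n : ℕ, n₀ ≤ n → N (u n - x) < ε

/-- Completeness with respect to the pseudo-metric `d(x,y) = N (x - y)`. -/
def RankComplete {R : Type*} [Ring R] (N : R → ℝ) : Prop :=
  ∀ u : ℕ → R, RankCauchy N u → ∃ x : R, RankTendsto N u x

/-- Density of a subset with respect to the pseudo-metric `d(x,y) = N (x - y)`. -/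
def RankDense {R : Type*} [Ring R] (N : R → ℝ) (S : Set R) : Prop :=
  ∀ x : R, ∀ ε : ℝ, 0 < ε → ∃ y ∈ S, N (x - y) < ε

/-- von Neumann regularity. -/
def VNRegular (R : Type*) [Ring R] : Prop :=
  ∀ x : R, ∃ y : R, x = x * y * x

/-- A continuous factor: a simple, von Neumann regular, right and left self-injective ring
admitting a rank function whose image is all of `[0,1]`. -/
def IsContinuousFactor (R : Type*) [Ring R] : Prop :=
  IsSimpleRing R ∧ VNRegular R ∧ Module.Injective R R ∧ Module.Injective Rᵐᵒᵖ Rᵐᵒᵖ ∧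
    ∃ N : R → ℝ, IsRankFunction N ∧ Set.range N = Set.Icc (0 : ℝ) 1

/-- An extremal pseudo-rank function: an extreme point of the convex set of all
pseudo-rank functions. -/
def IsExtremalPseudoRankFunction {R : Type*} [Ring R] (N : R → ℝ) : Prop :=
  N ∈ Set.extremePoints ℝ {S : R → ℝ | IsPseudoRankFunction S}

/-! ### Matricial and ultramatricial algebras -/

/-- A matricial `K`-algebra. -/
def IsMatricialAlgebra (K : Type*) [Field K] (A : Type*) [Ring A] [Algebra K A] : Prop :=
  ∃ (k : ℕ) (n : Fin (k + 1) → ℕ), (∀ i, 0 < n i) ∧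
    Nonempty (A ≃ₐ[K] ((i : Fin (k + 1)) → Matrix (Fin (n i)) (Fin (n i)) K))

/-- An ultramatricial `K`-algebra: the increasing union of matricial subalgebras. -/
def IsUltramatricialAlgebra (K : Type*) [Field K] (B : Type*) [Ring B] [Algebra K B] : Prop :=
  ∃ C : ℕ → Subalgebra K B, (∀ n, C n ≤ C (n + 1)) ∧
    (∀ n, IsMatricialAlgebra K (C n)) ∧ (∀ b : B, ∃ n, b ∈ C n)

/-- `Q`, with rank function `N`, is the rank-metric completion of a direct limit of the matrix
algebras `M_{p n}(K)`: it is complete and carries a dense increasing tower of unital subalgebras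
isomorphic to `M_{p n}(K)`. -/
def IsMatrixTowerCompletion (K : Type*) [Field K] (Q : Type*) [Ring Q] [Algebra K Q]
    (N : Q → ℝ) (p : ℕ → ℕ) : Prop :=
  IsRankFunction N ∧ RankComplete N ∧
    ∃ A : ℕ → Subalgebra K Q, (∀ n, A n ≤ A (n + 1)) ∧
      (∀ n, Nonempty ((A n) ≃ₐ[K] Matrix (Fin (p n)) (Fin (p n)) K)) ∧
      RankDense N (⋃ n, (A n : Set Q))

/-- `Q` is (a copy of) von Neumann's continuous factor `M_K`, the completion of
`lim_n M_{2^n}(K)` with respect to its unique rank function. -/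
def IsMK (K : Type*) [Field K] (Q : Type*) [Ring Q] [Algebra K Q] (N : Q → ℝ) : Prop :=
  IsMatrixTowerCompletion K Q N (fun n => 2 ^ n)

/-- The canonical block-diagonal unital embedding `M_a(K) → M_b(K)`, `z ↦ z ⊗ 1_g`,
where `b = a * g`. -/
def blockEmbedFun (K : Type*) [Semiring K] {a : ℕ} (g b : ℕ) (h : a * g = b)
    (z : Matrix (Fin a) (Fin a) K) : Matrix (Fin b) (Fin b) K :=
  Matrix.reindex (finProdFinEquiv.trans (finCongr h)) (finProdFinEquiv.trans (finCongr h))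
    (z ⊗ₖ (1 : Matrix (Fin g) (Fin g) K))

end AraClaramunt
namespace AraClaramunt

/-- The matrix-unit approximation property for a constant `c` and a size `p`: matrix units of
`M_p(K)` that are almost contained in a regular subalgebra `A` (up to `ε` in rank) can be
realized exactly inside `A`, moving each of them by at most `c * ε`. -/
def MatrixUnitApproxProperty (c : ℝ) (p : ℕ) : Prop :=
  ∀ (K : Type) [Field K] (B : Type) [Ring B] [Algebra K B] (N : B → ℝ)
    (A : Subalgebra K B),
    IsPseudoRankFunction N →
    (∀ x ∈ A, ∃ y ∈ A, x = x * y * x) →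
    ∀ ε : ℝ, 0 < ε →
      ∀ ρ : Matrix (Fin p) (Fin p) K →ₙₐ[K] B,
        (∀ i j : Fin p, ∃ a ∈ A, N (ρ (Matrix.single i j 1) - a) < ε) →
          ∃ ψ : Matrix (Fin p) (Fin p) K →ₙₐ[K] A,
            ∀ i j : Fin p,
              N (ρ (Matrix.single i j 1)
                - (ψ (Matrix.single i j 1) : B)) < c * ε

open Finset

section OrthogonalIdempotents

variable {R I : Type*} [Semiring R] {e : I → R}

theorem _root_.OrthogonalIdempotents.sum_mul_of_mem (he : OrthogonalIdempotents e) {i : I}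
    {s : Finset I} (h : i ∈ s) : (∑ j ∈ s, e j) * e i = e i := by
  classical
  simp [Finset.sum_mul, he.mul_eq, h]

theorem _root_.OrthogonalIdempotents.sum_mul_of_notMem (he : OrthogonalIdempotents e) {i : I}
    {s : Finset I} (h : i ∉ s) : (∑ j ∈ s, e j) * e i = 0 := by
  classical
  simp [Finset.sum_mul, he.mul_eq, h]

theorem _root_.OrthogonalIdempotents.update [DecidableEq I] (he : OrthogonalIdempotents e)
    {i : I} {x : R} (hx : IsIdempotentElem x) (hxe : ∀ j, j ≠ i → x * e j = 0)
    (hex : ∀ j, j ≠ i → e j * x = 0) : OrthogonalIdempotents (Function.update e i x) where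
  idem j := by
    rcases eq_or_ne j i with rfl | hj
    · simpa using hx
    · simpa [hj] using he.idem j
  ortho j k hjk := by
    rcases eq_or_ne j i with rfl | hj
    · simpa [Ne.symm hjk] using hxe k (Ne.symm hjk)
    rcases eq_or_ne k i with rfl | hk
    · simpa [hj] using hex j hj
    · simpa [hj, hk] using he.ortho hjk

end OrthogonalIdempotents

structure IsMatrixUnits {ι R : Type*} [Mul R] [Zero R] (e : ι → ι → R) : Prop where
  mul_same : ∀ i j k, e i j * e j k = e i k
  mul_of_ne : ∀ {i j k l}, j ≠ k → e i j * e k l = 0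

namespace IsMatrixUnits

variable {ι R : Type*}

section Semiring

variable [Semiring R] {e : ι → ι → R}

theorem mul_eq [DecidableEq ι] (he : IsMatrixUnits e) (i j k l : ι) :
    e i j * e k l = if j = k then e i l else 0 := by
  split_ifs with hjk
  · subst hjk; exact he.mul_same i j l
  · exact he.mul_of_ne hjk

theorem orthogonalIdempotents (he : IsMatrixUnits e) : OrthogonalIdempotents fun i ↦ e i i where
  idem i := he.mul_same i i i
  ortho _ _ hij := he.mul_of_ne hij

theorem map {S F : Type*} [Semiring S] [FunLike F R S] [NonUnitalRingHomClass F R S] (φ : F)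
    (he : IsMatrixUnits e) : IsMatrixUnits fun i j ↦ φ (e i j) where
  mul_same i j k := by rw [← map_mul, he.mul_same]
  mul_of_ne hjk := by rw [← map_mul, he.mul_of_ne hjk, map_zero]

end Semiring

theorem single [DecidableEq ι] [Fintype ι] (K : Type*) [Semiring K] :
    IsMatrixUnits fun i j : ι ↦ (Matrix.single i j 1 : Matrix ι ι K) where
  mul_same i j k := by rw [Matrix.single_mul_single_same, one_mul]
  mul_of_ne hjk := by simp [hjk]

variable [Fintype ι] [DecidableEq ι] {K : Type*} [CommSemiring K] [Semiring R] [Algebra K R]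
  {F : ι → ι → R}

def nonUnitalAlgHom (hF : IsMatrixUnits F) : Matrix ι ι K →ₙₐ[K] R where
  toFun x := ∑ i, ∑ j, x i j • F i j
  map_smul' c x := by simp [Finset.smul_sum, mul_smul]
  map_zero' := by simp
  map_add' x y := by simp [add_smul, Finset.sum_add_distrib]
  map_mul' x y := by
    simp only [Matrix.mul_apply, Finset.sum_smul, Finset.sum_mul, Finset.mul_sum,
      smul_mul_smul_comm, hF.mul_eq, smul_ite, smul_zero, Finset.sum_ite_eq', Finset.mem_univ,
      if_true]
    rw [Finset.sum_comm]
    conv_rhs => rw [Finset.sum_comm]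
    exact Finset.sum_congr rfl fun _ _ ↦ Finset.sum_comm

theorem nonUnitalAlgHom_single (hF : IsMatrixUnits F) (i j : ι) :
    hF.nonUnitalAlgHom (Matrix.single i j (1 : K)) = F i j := by
  simp [nonUnitalAlgHom, Matrix.single_apply, ite_and]

end IsMatrixUnits

namespace IsPseudoRankFunction

variable {B : Type*} [Ring B] {N : B → ℝ}

theorem map_zero (hN : IsPseudoRankFunction N) : N 0 = 0 := by
  have h := hN.add_of_orthogonal 0 0 .zero .zero (mul_zero 0) (mul_zero 0)
  rw [add_zero] at h
  linarith

theorem map_neg (hN : IsPseudoRankFunction N) (x : B) : N (-x) = N x := by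
  refine le_antisymm ?_ ?_
  · simpa using hN.mul_le_left x (-1)
  · simpa using hN.mul_le_left (-x) (-1)

theorem map_sub_comm (hN : IsPseudoRankFunction N) (x y : B) : N (x - y) = N (y - x) := by
  rw [← neg_sub, hN.map_neg]

theorem map_sub_le_add (hN : IsPseudoRankFunction N) (x y z : B) :
    N (x - z) ≤ N (x - y) + N (y - z) := by
  simpa using hN.subadditive (x - y) (y - z)

theorem le_add_map_sub (hN : IsPseudoRankFunction N) (x y : B) : N x ≤ N y + N (x - y) := by
  simpa using hN.subadditive y (x - y)

theorem map_mul_sub_mul_le (hN : IsPseudoRankFunction N) (x x' y y' : B) :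
    N (x * y - x' * y') ≤ N (x - x') + N (y - y') := by
  have h : x * y - x' * y' = (x - x') * y + x' * (y - y') := by noncomm_ring
  rw [h]
  linarith [hN.subadditive ((x - x') * y) (x' * (y - y')), hN.mul_le_left (x - x') y,
    hN.mul_le_right x' (y - y')]

theorem map_mul_mul_sub_mul_mul_le (hN : IsPseudoRankFunction N) (x x' y y' z z' : B) :
    N (x * y * z - x' * y' * z') ≤ N (x - x') + N (y - y') + N (z - z') := by
  linarith [hN.map_mul_sub_mul_le (x * y) (x' * y') z z', hN.map_mul_sub_mul_le x x' y y']

theorem map_mul_sub_mul_left_le (hN : IsPseudoRankFunction N) (u x y : B) :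
    N (u * x - u * y) ≤ N (x - y) := by
  simpa [hN.map_zero] using hN.map_mul_sub_mul_le u u x y

theorem map_mul_sub_mul_right_le (hN : IsPseudoRankFunction N) (x y u : B) :
    N (x * u - y * u) ≤ N (x - y) := by
  simpa [hN.map_zero] using hN.map_mul_sub_mul_le x y u u

theorem map_sub_of_mul_eq (hN : IsPseudoRankFunction N) {e f : B} (he : IsIdempotentElem e)
    (hf : IsIdempotentElem f) (hef : e * f = f) (hfe : f * e = f) : N (e - f) = N e - N f := by
  have hsub : IsIdempotentElem (e - f) := by
    simp only [IsIdempotentElem, sub_mul, mul_sub, he.eq, hf.eq, hef, hfe, sub_self, sub_zero]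
  have h := hN.add_of_orthogonal (e - f) f hsub hf (by rw [sub_mul, hef, hf.eq, sub_self])
    (by rw [mul_sub, hfe, hf.eq, sub_self])
  rw [sub_add_cancel] at h
  linarith

theorem map_mul_self_sub_le (hN : IsPseudoRankFunction N) {u : B} (hu : IsIdempotentElem u)
    (v : B) : N (v * v - v) ≤ 3 * N (v - u) := by
  have h : v * v - v = (v * v - u * u) + (u - v) := by rw [hu.eq]; abel
  rw [h]
  linarith [hN.subadditive (v * v - u * u) (u - v), hN.map_mul_sub_mul_le v u v u,
    hN.map_sub_comm u v]

theorem map_mul_of_mul_mul_eq (hN : IsPseudoRankFunction N) {b t : B} (h : b * t * b = b) :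
    N (t * b) = N b ∧ N (b * t) = N b := by
  refine ⟨le_antisymm (hN.mul_le_right t b) ?_, le_antisymm (hN.mul_le_left b t) ?_⟩
  · calc N b = N (b * (t * b)) := by rw [← mul_assoc, h]
      _ ≤ N (t * b) := hN.mul_le_right _ _
  · calc N b = N (b * t * b) := by rw [h]
      _ ≤ N (b * t) := hN.mul_le_left _ _

theorem map_matrixUnit_eq (hN : IsPseudoRankFunction N) {ι : Type*} {e : ι → ι → B}
    (he : IsMatrixUnits e) (i j k l : ι) :
    N (e i j) = N (e k l) := by
  have key : ∀ i j k l, N (e i j) ≤ N (e k l) := fun i j k l ↦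
    calc N (e i j) = N (e i k * e k l * e l j) := by rw [he.mul_same, he.mul_same]
      _ ≤ N (e i k * e k l) := hN.mul_le_left _ _
      _ ≤ N (e k l) := hN.mul_le_right _ _
  exact le_antisymm (key i j k l) (key k l i j)

theorem map_sub_matrixUnit_le_of_mul_mul_eq (hN : IsPseudoRankFunction N) {ι : Type*}
    {e : ι → ι → B} (he : IsMatrixUnits e) {b t : B} (htbt : t * b * t = t) (i j : ι) :
    N (t - e j i) ≤ N (t * b - e j j) + N (b * t - e i i) + N (b - e i j) := by
  have hdecomp :
      t - e j i = (t * b * t - e j i * b * t) + (e j i * (b * t) - e j i * e i i) := by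
    rw [htbt, he.mul_same]; noncomm_ring
  have hjj : N (t * b - e j i * b) ≤ N (t * b - e j j) + N (b - e i j) := by
    have := hN.map_mul_sub_mul_left_le (e j i) (e i j) b
    rw [he.mul_same] at this
    linarith [hN.map_sub_le_add (t * b) (e j j) (e j i * b), hN.map_sub_comm b (e i j)]
  rw [hdecomp]
  linarith [hN.subadditive (t * b * t - e j i * b * t) (e j i * (b * t) - e j i * e i i),
    hN.map_mul_sub_mul_right_le (t * b) (e j i * b) t,
    hN.map_mul_sub_mul_left_le (e j i) (b * t) (e i i)]

end IsPseudoRankFunction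

section RegularSubring

variable {B : Type*} [Ring B] {N : B → ℝ} {A : Subring B}

theorem isIdempotentElem_add_mul_one_sub {e x : B} (he : IsIdempotentElem e) (hex : e * x = x) :
    IsIdempotentElem (e + x * (1 - e)) := by
  have h1 : (1 - e) * e = 0 := by rw [sub_mul, one_mul, he.eq, sub_self]
  have h2 : (1 - e) * x = 0 := by rw [sub_mul, one_mul, hex, sub_self]
  calc (e + x * (1 - e)) * (e + x * (1 - e))
      = e * e + e * x * (1 - e) + x * ((1 - e) * e) + x * ((1 - e) * x) * (1 - e) := by
        noncomm_ring
    _ = e + x * (1 - e) := by rw [he.eq, hex, h1, h2]; simp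

theorem exists_isIdempotentElem_near (hN : IsPseudoRankFunction N)
    (hreg : ∀ x ∈ A, ∃ y ∈ A, x = x * y * x) {h x : B} (hh : IsIdempotentElem h) (hhA : h ∈ A)
    (hxA : x ∈ A) (hhx : h * x = x) (hxh : x * h = x) :
    ∃ g ∈ A, IsIdempotentElem g ∧ h * g = g ∧ g * h = g ∧ N (g - x) ≤ N (x * x - x) := by
  obtain ⟨y, hyA, hxyx⟩ := hreg x hxA
  set e := x * (y * h)
  have heA : e ∈ A := A.mul_mem hxA (A.mul_mem hyA hhA)
  have hex : e * x = x := by simp only [e, mul_assoc, hhx]; rw [← mul_assoc, ← hxyx]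
  have he : IsIdempotentElem e := by
    rw [IsIdempotentElem, show e * e = e * x * (y * h) by simp only [e, mul_assoc], hex]
  have hhe : h * e = e := by rw [← mul_assoc, hhx]
  have heh : e * h = e := by simp only [e, mul_assoc, hh.eq]
  refine ⟨e + x * (1 - e), A.add_mem heA (A.mul_mem hxA (A.sub_mem A.one_mem heA)),
    isIdempotentElem_add_mul_one_sub he hex, ?_, ?_, ?_⟩
  · rw [mul_add, hhe, ← mul_assoc, hhx]
  · rw [add_mul, heh, mul_assoc, sub_mul, one_mul, heh, mul_sub, mul_sub, hxh, mul_one]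
  · have hgx : e + x * (1 - e) - x = -((x * x - x) * (y * h)) := by
      simp only [e]; noncomm_ring
    rw [hgx, hN.map_neg]
    exact hN.mul_le_left _ _

theorem exists_reflexive_inverse (hreg : ∀ x ∈ A, ∃ y ∈ A, x = x * y * x) {b f g : B}
    (hbA : b ∈ A) (hfA : f ∈ A) (hgA : g ∈ A) (hf : IsIdempotentElem f) (hg : IsIdempotentElem g)
    (hgb : g * b = b) (hbf : b * f = b) :
    ∃ t ∈ A, f * t = t ∧ t * g = t ∧ b * t * b = b ∧ t * b * t = t := by
  obtain ⟨y, hyA, hbyb⟩ := hreg b hbA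
  set s := f * y * g
  have hbsb : b * s * b = b := by
    calc b * s * b = (b * f) * y * (g * b) := by simp only [s]; noncomm_ring
      _ = b := by rw [hbf, hgb, ← hbyb]
  refine ⟨s * b * s, A.mul_mem (A.mul_mem (A.mul_mem (A.mul_mem hfA hyA) hgA) hbA)
    (A.mul_mem (A.mul_mem hfA hyA) hgA), ?_, ?_, ?_, ?_⟩
  · simp only [s, ← mul_assoc, hf.eq]
  · simp only [s, mul_assoc, hg.eq]
  · calc b * (s * b * s) * b = (b * s * b) * s * b := by noncomm_ring
      _ = b := by rw [hbsb, hbsb]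
  · calc s * b * s * b * (s * b * s) = s * ((b * s * b) * s * b) * s := by noncomm_ring
      _ = s * b * s := by rw [hbsb, hbsb]

end RegularSubring

section LiftingIdempotents

variable {B ι : Type*} [Ring B] {N : B → ℝ} {A : Subring B}

theorem exists_isIdempotentElem_le_near (hN : IsPseudoRankFunction N)
    (hreg : ∀ x ∈ A, ∃ y ∈ A, x = x * y * x) {h h' u a : B} (hh : IsIdempotentElem h)
    (hhA : h ∈ A) (haA : a ∈ A) (hu : IsIdempotentElem u) (hu' : h' * u * h' = u) :
    ∃ v ∈ A, IsIdempotentElem v ∧ h * v = v ∧ v * h = v ∧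
      N (v - u) ≤ 4 * (2 * N (h - h') + N (u - a)) := by
  set x := h * a * h
  obtain ⟨v, hvA, hv, hhv, hvh, hvx⟩ := exists_isIdempotentElem_near hN hreg hh hhA
    (A.mul_mem (A.mul_mem hhA haA) hhA) (x := x) (by simp only [x, ← mul_assoc, hh.eq])
    (by simp only [x, mul_assoc, hh.eq])
  have hxu : N (x - u) ≤ 2 * N (h - h') + N (u - a) := by
    have := hN.map_mul_mul_sub_mul_mul_le h h' a u h h'
    rw [hu', hN.map_sub_comm a] at this
    linarith
  refine ⟨v, hvA, hv, hhv, hvh, ?_⟩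
  linarith [hN.map_sub_le_add v x u, hN.map_mul_self_sub_le hu x]

-- Keeping `g` zero off `s` makes it an orthogonal family on all of `ι` throughout the induction.
theorem exists_orthogonalIdempotents_near_of_finset (hN : IsPseudoRankFunction N)
    (hreg : ∀ x ∈ A, ∃ y ∈ A, x = x * y * x) {u : ι → B} (hu : OrthogonalIdempotents u)
    {ε : ℝ} (ha : ∀ i, ∃ a ∈ A, N (u i - a) ≤ ε) (s : Finset ι) :
    ∃ g : ι → B, OrthogonalIdempotents g ∧ (∀ i, g i ∈ A) ∧ (∀ i ∉ s, g i = 0) ∧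
      (∀ i ∈ s, N (g i - u i) ≤ 9 ^ #s * ε) ∧
      2 * N (∑ i ∈ s, g i - ∑ i ∈ s, u i) + ε ≤ 9 ^ #s * ε := by
  classical
  induction s using Finset.induction_on with
  | empty =>
    exact ⟨0, ⟨fun _ ↦ .zero, fun _ _ _ ↦ mul_zero 0⟩, fun _ ↦ A.zero_mem, fun _ _ ↦ rfl,
      by simp, by simp [hN.map_zero]⟩
  | insert a s has ih =>
    obtain ⟨g, hg, hgA, hg0, hgu, hsum⟩ := ih
    obtain ⟨a', ha'A, ha'⟩ := ha a
    have hε : 0 ≤ ε := (hN.nonneg _).trans ha'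
    have hGg : ∀ k, (∑ i ∈ s, g i) * g k = g k ∧ g k * ∑ i ∈ s, g i = g k := fun k ↦ by
      by_cases hk : k ∈ s
      · exact ⟨hg.sum_mul_of_mem hk, hg.mul_sum_of_mem hk⟩
      · simp [hg0 k hk]
    have hua : (1 - ∑ i ∈ s, u i) * u a * (1 - ∑ i ∈ s, u i) = u a := by
      rw [sub_mul, one_mul, hu.sum_mul_of_notMem has, sub_zero, mul_sub, mul_one,
        hu.mul_sum_of_notMem has, sub_zero]
    obtain ⟨v, hvA, hv, hhv, hvh, hvu⟩ := exists_isIdempotentElem_le_near hN hreg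
      hg.isIdempotentElem_sum.one_sub (A.sub_mem A.one_mem (A.sum_mem fun i _ ↦ hgA i)) ha'A
      (hu.idem a) hua
    rw [sub_sub_sub_cancel_left, hN.map_sub_comm (∑ i ∈ s, u i)] at hvu
    have hpos : 0 ≤ (9 : ℝ) ^ #s * ε := by positivity
    have hpow : (9 : ℝ) ^ #s * ε ≤ 9 ^ #(insert a s) * ε := by
      rw [card_insert_of_notMem has, pow_succ]; linarith
    refine ⟨Function.update g a v, hg.update hv ?_ ?_, ?_, ?_, ?_, ?_⟩
    · intro j _; rw [← hvh, mul_assoc, sub_mul, one_mul, (hGg j).1, sub_self, mul_zero]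
    · intro j _; rw [← hhv, ← mul_assoc, mul_sub, mul_one, (hGg j).2, sub_self, zero_mul]
    · intro i
      rcases eq_or_ne i a with rfl | hi
      · simpa using hvA
      · simpa [hi] using hgA i
    · intro i hi
      rw [mem_insert, not_or] at hi
      simp [hi.1, hg0 i hi.2]
    · intro i hi
      rcases eq_or_ne i a with rfl | hia
      · simp only [Function.update_self]
        rw [card_insert_of_notMem has, pow_succ]
        linarith
      · simp only [Function.update_of_ne hia]
        exact (hgu i ((mem_insert.1 hi).resolve_left hia)).trans hpow
    · have hs : ∑ i ∈ s, Function.update g a v i = ∑ i ∈ s, g i :=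
        sum_congr rfl fun i hi ↦ Function.update_of_ne (ne_of_mem_of_not_mem hi has) _ _
      rw [sum_insert has, sum_insert has, hs, Function.update_self, add_sub_add_comm]
      have := hN.subadditive (v - u a) (∑ i ∈ s, g i - ∑ i ∈ s, u i)
      rw [card_insert_of_notMem has, pow_succ]
      linarith

end LiftingIdempotents

-- A witness that the idempotent `f` is Murray–von Neumann subequivalent to `g`.
structure EmbedsVia {R : Type*} [Mul R] (f g c d : R) : Prop where
  mul_left : g * c = c
  mul_right : c * f = c
  left_mul : f * d = d
  right_mul : d * g = d
  mul_eq : d * c = f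

namespace EmbedsVia

variable {R : Type*} [Semigroup R] {f g c d : R}

theorem restrict {f' : R} (h : EmbedsVia f g c d) (hf' : IsIdempotentElem f') (hf'f : f' * f = f') :
    EmbedsVia f' g (c * f') (f' * d) where
  mul_left := by rw [← mul_assoc, h.mul_left]
  mul_right := by rw [mul_assoc, hf'.eq]
  left_mul := by rw [← mul_assoc, hf'.eq]
  right_mul := by rw [mul_assoc, h.right_mul]
  mul_eq := by rw [mul_assoc, ← mul_assoc d, h.mul_eq, ← mul_assoc, hf'f, hf'.eq]

theorem of_mul_mul_eq {b t : R} (hgb : g * b = b) (htg : t * g = t) (hbtb : b * t * b = b)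
    (htbt : t * b * t = t) : EmbedsVia (t * b) g b t where
  mul_left := hgb
  mul_right := by rw [← mul_assoc, hbtb]
  left_mul := htbt
  right_mul := htg
  mul_eq := rfl

end EmbedsVia

theorem IsMatrixUnits.of_embedsVia {R ι : Type*} [Ring R] {f : R} {g c d : ι → R}
    (hg : OrthogonalIdempotents g) (h : ∀ j, EmbedsVia f (g j) (c j) (d j)) :
    IsMatrixUnits fun i j ↦ c i * d j where
  mul_same i j k := by
    rw [mul_assoc, ← mul_assoc (d j), (h j).mul_eq, ← mul_assoc, (h i).mul_right]
  mul_of_ne {i j k l} hjk := by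
    rw [mul_assoc, ← mul_assoc (d j), ← (h j).right_mul, ← (h k).mul_left, mul_assoc (d j),
      ← mul_assoc (g j), hg.ortho hjk]
    simp

section LiftingMatrixUnits

variable {B ι : Type*} [Ring B] {N : B → ℝ} {A : Subring B} {e : ι → ι → B}

theorem exists_embedsVia_step (hN : IsPseudoRankFunction N)
    (hreg : ∀ x ∈ A, ∃ y ∈ A, x = x * y * x) (he : IsMatrixUnits e) {i₀ a : ι}
    {g₀ gₐ f a' : B} {M ε : ℝ} (hg₀ : IsIdempotentElem g₀) (hgₐ : IsIdempotentElem gₐ)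
    (hgₐA : gₐ ∈ A) (hg₀e : N (g₀ - e i₀ i₀) ≤ M) (hgₐe : N (gₐ - e a a) ≤ M)
    (hf : IsIdempotentElem f) (hfA : f ∈ A) (hfg : f * g₀ = f) (hgf : g₀ * f = f)
    (ha'A : a' ∈ A) (ha' : N (e a i₀ - a') ≤ ε) :
    ∃ f' b t, f' ∈ A ∧ IsIdempotentElem f' ∧ f' * f = f' ∧ f * f' = f' ∧
      N (f - f') ≤ 3 * M + ε ∧ b ∈ A ∧ t ∈ A ∧ EmbedsVia f' gₐ b t ∧
      N (b - e a i₀) ≤ N (g₀ - f) + (3 * M + ε) ∧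
      N (t - e i₀ a) ≤ 3 * N (g₀ - f) + 4 * (3 * M + ε) := by
  have hM : 0 ≤ M := (hN.nonneg _).trans hg₀e
  have hε : 0 ≤ ε := (hN.nonneg _).trans ha'
  set b := gₐ * a' * f
  have hbA : b ∈ A := A.mul_mem (A.mul_mem hgₐA ha'A) hfA
  have hgb : gₐ * b = b := by simp only [b, ← mul_assoc, hgₐ.eq]
  have hbf : b * f = b := by simp only [b, mul_assoc, hf.eq]
  have hb : N (b - e a i₀) ≤ 2 * M + ε + N (g₀ - f) := by
    have := hN.map_mul_mul_sub_mul_mul_le gₐ (e a a) a' (e a i₀) f (e i₀ i₀)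
    rw [he.mul_same, he.mul_same, hN.map_sub_comm a'] at this
    linarith [hN.map_sub_le_add f g₀ (e i₀ i₀), hN.map_sub_comm f g₀]
  obtain ⟨t, htA, hft, htg, hbtb, htbt⟩ :=
    exists_reflexive_inverse hreg hbA hfA hgₐA hf hgₐ hgb hbf
  have htbI : IsIdempotentElem (t * b) := by rw [IsIdempotentElem, ← mul_assoc, htbt]
  have hbtI : IsIdempotentElem (b * t) := by rw [IsIdempotentElem, ← mul_assoc, hbtb]
  have htbf : t * b * f = t * b := by rw [mul_assoc, hbf]
  have hftb : f * (t * b) = t * b := by rw [← mul_assoc, hft]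
  have hNg₀f := hN.map_sub_of_mul_eq hg₀ hf hgf hfg
  have hNff' := hN.map_sub_of_mul_eq hf htbI hftb htbf
  have hNg₀f' := hN.map_sub_of_mul_eq hg₀ htbI (by rw [← hftb, ← mul_assoc, hgf])
    (by rw [← htbf, mul_assoc, hfg])
  have hNgₐ := hN.map_sub_of_mul_eq hgₐ hbtI (by rw [← mul_assoc, hgb]) (by rw [mul_assoc, htg])
  obtain ⟨hNtb, hNbt⟩ := hN.map_mul_of_mul_mul_eq hbtb
  have hranks := hN.le_add_map_sub (e a i₀) b
  rw [hN.map_matrixUnit_eq he a i₀ i₀ i₀, hN.map_sub_comm] at hranks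
  have hL : N (f - t * b) ≤ 3 * M + ε := by
    linarith [hN.le_add_map_sub g₀ (e i₀ i₀)]
  refine ⟨t * b, b, t, A.mul_mem htA hbA, htbI, htbf, hftb, hL, hbA, htA,
    EmbedsVia.of_mul_mul_eq hgb htg hbtb htbt, by linarith, ?_⟩
  linarith [hN.map_sub_matrixUnit_le_of_mul_mul_eq he htbt a i₀,
    hN.map_sub_le_add (t * b) g₀ (e i₀ i₀), hN.map_sub_comm (t * b) g₀,
    hN.map_sub_le_add (b * t) gₐ (e a a), hN.map_sub_comm (b * t) gₐ,
    hN.le_add_map_sub gₐ (e a a), hN.map_matrixUnit_eq he a a i₀ i₀]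

theorem exists_embedsVia_near_of_finset (hN : IsPseudoRankFunction N)
    (hreg : ∀ x ∈ A, ∃ y ∈ A, x = x * y * x) (he : IsMatrixUnits e) {g : ι → B}
    (hg : ∀ i, IsIdempotentElem (g i)) (hgA : ∀ i, g i ∈ A) {M ε : ℝ}
    (hge : ∀ i, N (g i - e i i) ≤ M) (i₀ : ι) (ha : ∀ i, ∃ a ∈ A, N (e i i₀ - a) ≤ ε)
    (s : Finset ι) :
    ∃ (f : B) (c d : ι → B), f ∈ A ∧ IsIdempotentElem f ∧ f * g i₀ = f ∧ g i₀ * f = f ∧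
      N (g i₀ - f) ≤ #s * (3 * M + ε) ∧
      ∀ j ∈ s, c j ∈ A ∧ d j ∈ A ∧ EmbedsVia f (g j) (c j) (d j) ∧
        N (c j - e j i₀) ≤ (3 * #s + 1) * (3 * M + ε) ∧
        N (d j - e i₀ j) ≤ (3 * #s + 1) * (3 * M + ε) := by
  classical
  induction s using Finset.induction_on with
  | empty =>
    exact ⟨g i₀, 0, 0, hgA i₀, hg i₀, (hg i₀).eq, (hg i₀).eq, by simp [hN.map_zero], by simp⟩
  | insert a s has ih =>
    obtain ⟨f, c, d, hfA, hf, hfg, hgf, hD, hcd⟩ := ih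
    obtain ⟨a', ha'A, ha'⟩ := ha a
    obtain ⟨f', b, t, hf'A, hf', hf'f, hff', hL, hbA, htA, hE, hb, ht⟩ :=
      exists_embedsVia_step hN hreg he (hg i₀) (hg a) (hgA a) (hge i₀) (hge a) hf hfA hfg hgf
        ha'A ha'
    have hL0 : 0 ≤ 3 * M + ε := (hN.nonneg _).trans hL
    have hsL : 0 ≤ (#s : ℝ) * (3 * M + ε) := by positivity
    have hcard : ((#(insert a s) : ℕ) : ℝ) = #s + 1 := by
      rw [card_insert_of_notMem has]; push_cast; ring
    rw [hcard]
    refine ⟨f', Function.update (fun j ↦ c j * f') a b, Function.update (fun j ↦ f' * d j) a t,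
      hf'A, hf', by rw [← hf'f, mul_assoc, hfg], by rw [← hff', ← mul_assoc, hgf], ?_, ?_⟩
    · linarith [hN.map_sub_le_add (g i₀) f f']
    intro j hj
    rcases eq_or_ne j a with rfl | hja
    · simp only [Function.update_self]
      exact ⟨hbA, htA, hE, by linarith, by linarith⟩
    obtain ⟨hcA, hdA, hE', hc, hd⟩ := hcd j ((mem_insert.1 hj).resolve_left hja)
    simp only [ne_eq, hja, not_false_eq_true, Function.update_of_ne]
    have hf'f_sub : N (f' - f) ≤ 3 * M + ε := by rwa [hN.map_sub_comm]
    refine ⟨A.mul_mem hcA hf'A, A.mul_mem hf'A hdA, hE'.restrict hf' hf'f, ?_, ?_⟩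
    · have := hN.map_mul_sub_mul_left_le (c j) f' f
      rw [hE'.mul_right] at this
      linarith [hN.map_sub_le_add (c j * f') (c j) (e j i₀)]
    · have := hN.map_mul_sub_mul_right_le f' f (d j)
      rw [hE'.left_mul] at this
      linarith [hN.map_sub_le_add (f' * d j) (d j) (e i₀ j)]

theorem exists_isMatrixUnits_near [Fintype ι] [Nonempty ι] (hN : IsPseudoRankFunction N)
    (hreg : ∀ x ∈ A, ∃ y ∈ A, x = x * y * x) (he : IsMatrixUnits e) {ε : ℝ}
    (ha : ∀ i j, ∃ a ∈ A, N (e i j - a) ≤ ε) :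
    ∃ F : ι → ι → B, (∀ i j, F i j ∈ A) ∧ IsMatrixUnits F ∧
      ∀ i j, N (e i j - F i j) ≤
        2 * (3 * Fintype.card ι + 1) * (3 * 9 ^ Fintype.card ι + 1) * ε := by
  obtain ⟨g, hg, hgA, -, hge, -⟩ := exists_orthogonalIdempotents_near_of_finset hN hreg
    he.orthogonalIdempotents (fun i ↦ ha i i) univ
  rw [card_univ] at hge
  let i₀ : ι := Classical.arbitrary ι
  obtain ⟨f, c, d, -, -, -, -, -, hcd⟩ := exists_embedsVia_near_of_finset hN hreg he hg.idem hgA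
    (fun i ↦ hge i (mem_univ i)) i₀ (fun i ↦ ha i i₀) univ
  rw [card_univ] at hcd
  refine ⟨fun i j ↦ c i * d j, fun i j ↦ A.mul_mem (hcd i (mem_univ i)).1 (hcd j (mem_univ j)).2.1,
    IsMatrixUnits.of_embedsVia hg fun j ↦ (hcd j (mem_univ j)).2.2.1, fun i j ↦ ?_⟩
  have := hN.map_mul_sub_mul_le (e i i₀) (c i) (e i₀ j) (d j)
  rw [he.mul_same, hN.map_sub_comm (e i i₀), hN.map_sub_comm (e i₀ j)] at this
  linarith [(hcd i (mem_univ i)).2.2.2.1, (hcd j (mem_univ j)).2.2.2.2]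

end LiftingMatrixUnits

/-- **Lemma 2.4** (Ara–Claramunt). For every positive integer `p` there is a constant `K(p)`,
depending only on `p`, with the matrix-unit approximation property. -/
theorem statement1 (p : ℕ) (hp : 0 < p) :
    ∃ c : ℝ, 0 < c ∧ MatrixUnitApproxProperty c p := by
  refine ⟨2 * (3 * p + 1) * (3 * 9 ^ p + 1) + 1, by positivity, ?_⟩
  intro K _ B _ _ N A hN hreg ε hε ρ hρ
  have : Nonempty (Fin p) := ⟨⟨0, hp⟩⟩
  obtain ⟨F, hFA, hF, hFe⟩ := exists_isMatrixUnits_near (A := A.toSubring) hN hreg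
    ((IsMatrixUnits.single K).map ρ) fun i j ↦ (hρ i j).imp fun _ h ↦ ⟨h.1, h.2.le⟩
  have hF' : IsMatrixUnits fun i j ↦ (⟨F i j, hFA i j⟩ : A) :=
    ⟨fun i j k ↦ Subtype.ext (hF.mul_same i j k), fun hjk ↦ Subtype.ext (hF.mul_of_ne hjk)⟩
  refine ⟨hF'.nonUnitalAlgHom, fun i j ↦ ?_⟩
  rw [IsMatrixUnits.nonUnitalAlgHom_single]
  simp only [Fintype.card_fin] at hFe
  linarith [hFe i j]

end AraClaramunt
end
end

section
/- Let B be a unital ring equipped with a pseudo-rank function N, let A be a unital von Neumann regular subring of B, let e in B be an idempotent, and let x in A satisfy N(e - x) < eps. Then there exists an idempotent g in A with N(e - g) < 4*eps. -/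
open scoped TensorProduct Kronecker

noncomputable section

namespace AraClaramunt

/-! Choose `y ∈ A` with `x y x = x`. Then `g = 1 - (1 - x)(1 - x y)` is an idempotent of `A`
with `g ∈ x A` and `1 - g ∈ (1 - x) A`. Splitting `e - g = e (1 - g) - (1 - e) g` and using
`e (1 - x) = e (e - x)`, `(1 - e) x = -(1 - e)(e - x)`, both summands factor through `e - x`,
so `N (e - g) ≤ 2 N (e - x)`. -/

theorem isIdempotentElem_mul_of_mul_mul_self {S : Type*} [Semigroup S] {a b : S}
    (h : a * b * a = a) : IsIdempotentElem (a * b) := by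
  rw [IsIdempotentElem, ← mul_assoc, h]

theorem isIdempotentElem_one_sub_mul_one_sub_mul {R : Type*} [Ring R] {x y : R}
    (h : x * y * x = x) : IsIdempotentElem (1 - (1 - x) * (1 - x * y)) := by
  have hxy : IsIdempotentElem (1 - x * y) :=
    (isIdempotentElem_mul_of_mul_mul_self h).one_sub
  have habsorb : (1 - x * y) * (1 - x) = 1 - x * y := by
    rw [mul_sub, mul_one, sub_mul, one_mul, h]; abel
  refine IsIdempotentElem.one_sub ?_
  rw [IsIdempotentElem, mul_assoc, ← mul_assoc (1 - x * y), habsorb, hxy.eq]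

namespace IsPseudoRankFunction

variable {R : Type*} [Ring R] {N : R → ℝ}

theorem apply_mul_mul_le (hN : IsPseudoRankFunction N) (a b c : R) : N (a * b * c) ≤ N b :=
  (hN.mul_le_left _ _).trans (hN.mul_le_right _ _)

theorem apply_sub_le_two_mul (hN : IsPseudoRankFunction N) {e x g v w : R}
    (he : IsIdempotentElem e) (hg : g = x * w) (hg' : 1 - g = (1 - x) * v) :
    N (e - g) ≤ 2 * N (e - x) := by
  have hsplit : e - g = e * (e - x) * v + (1 - e) * (e - x) * w := by
    have h1 : e * (e - x) = e * (1 - x) := by rw [mul_sub, mul_sub, he.eq, mul_one]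
    have h2 : (1 - e) * (e - x) = -((1 - e) * x) := by
      rw [mul_sub, he.one_sub_mul_self, zero_sub]
    calc e - g = e * (1 - g) - (1 - e) * g := by noncomm_ring
      _ = e * (e - x) * v + (1 - e) * (e - x) * w := by
        rw [hg', hg, h1, h2]; noncomm_ring
  calc N (e - g) ≤ N (e * (e - x) * v) + N ((1 - e) * (e - x) * w) :=
        hsplit ▸ hN.subadditive _ _
    _ ≤ 2 * N (e - x) := by
      linarith [hN.apply_mul_mul_le e (e - x) v, hN.apply_mul_mul_le (1 - e) (e - x) w]

end IsPseudoRankFunction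

/-- The base case `p = 1`, `K(1) = 4`, of the matrix-unit approximation lemma: an idempotent of
`B` which is within `ε` (in rank) of an element of a unital von Neumann regular subring `A` is
within `4 ε` of an idempotent of `A`. -/
theorem statement2 (B : Type) [Ring B] (N : B → ℝ) (hN : IsPseudoRankFunction N)
    (A : Subring B) (hA : ∀ x ∈ A, ∃ y ∈ A, x = x * y * x)
    (e : B) (he : IsIdempotentElem e) (x : B) (hx : x ∈ A)
    (ε : ℝ) (hex : N (e - x) < ε) :
    ∃ g ∈ A, IsIdempotentElem g ∧ N (e - g) < 4 * ε := by
  obtain ⟨y, hy, hxyx⟩ := hA x hx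
  refine ⟨1 - (1 - x) * (1 - x * y), ?_, isIdempotentElem_one_sub_mul_one_sub_mul hxyx.symm, ?_⟩
  · exact A.sub_mem A.one_mem
      (A.mul_mem (A.sub_mem A.one_mem hx) (A.sub_mem A.one_mem (A.mul_mem hx hy)))
  · have hbound := hN.apply_sub_le_two_mul (x := x) (v := 1 - x * y) (w := 1 + y - x * y) he
      (by noncomm_ring) (sub_sub_cancel _ _)
    linarith [hN.nonneg (e - x)]

end AraClaramunt
end
end

section
/- Let N be a pseudo-rank function on a *-regular ring R. Then the involution is isometric for N, that is, N(r*) = N(r) for every r in R. -/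
open scoped TensorProduct Kronecker

noncomputable section

namespace AraClaramunt

/-! ### Star notions -/

/-- Properness of an involution: `x* x = 0` implies `x = 0`. -/
def ProperStar (R : Type*) [NonUnitalNonAssocRing R] [Star R] : Prop :=
  ∀ x : R, star x * x = 0 → x = 0

/-- A projection: a self-adjoint idempotent. -/
def IsProjection {R : Type*} [Mul R] [Star R] (p : R) : Prop :=
  star p = p ∧ p * p = p

/-- The order on projections: `q ≤ p` iff `p q = q p = q`. -/
def ProjLE {R : Type*} [Mul R] (q p : R) : Prop :=
  p * q = q ∧ q * p = q

/-- `*`-equivalence of projections: `e = w w*` and `f = w* w` for some `w`. -/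
def StarEquivProj {R : Type*} [Mul R] [Star R] (e f : R) : Prop :=
  ∃ w : R, e = w * star w ∧ f = star w * w

/-- Equivalence of projections: `e = x y`, `f = y x` with `x ∈ eRf`, `y ∈ fRe`. -/
def EquivProj {R : Type*} [Mul R] (e f : R) : Prop :=
  ∃ x y : R, x = e * x * f ∧ y = f * y * e ∧ e = x * y ∧ f = y * x

/-- `y` is the relative inverse of `x` in a `*`-regular ring. -/
def IsRelativeInverse {R : Type*} [Mul R] [Star R] (x y : R) : Prop :=
  x * y * x = x ∧ y * x * y = y ∧ star (x * y) = x * y ∧ star (y * x) = y * x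

/-- `e = LP(x)`: `e` is a projection with `x R = e R`. -/
def IsLeftProjOf {R : Type*} [Mul R] [Star R] (x e : R) : Prop :=
  IsProjection e ∧ e * x = x ∧ ∃ y : R, e = x * y

/-- `f = RP(x)`: `f` is a projection with `R x = R f`. -/
def IsRightProjOf {R : Type*} [Mul R] [Star R] (x f : R) : Prop :=
  IsProjection f ∧ x * f = x ∧ ∃ y : R, f = y * x

/-- Positive definiteness of the involution of a field. -/
def PosDefStar (F : Type*) [Field F] [StarRing F] : Prop :=
  ∀ (n : ℕ) (x : Fin n → F), (∑ i, star (x i) * x i) = 0 → ∀ i, x i = 0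

/-- `*`-Pythagorean field. -/
def StarPythagorean (F : Type*) [Field F] [StarRing F] : Prop :=
  ∀ x y : F, ∃ z : F, x * star x + y * star y = z * star z

/-- A standard matricial `*`-algebra over `(F, *)`: a `*`-algebra `*`-isomorphic to a finite
product of matrix algebras `M_{n i}(F)` with the `*`-transpose involution. -/
def IsStandardMatricialStarAlgebra (F : Type*) [Field F] [StarRing F]
    (A : Type*) [Ring A] [Algebra F A] [StarRing A] [StarModule F A] : Prop :=
  ∃ (k : ℕ) (n : Fin (k + 1) → ℕ), (∀ i, 0 < n i) ∧
    Nonempty (A ≃⋆ₐ[F] ((i : Fin (k + 1)) → Matrix (Fin (n i)) (Fin (n i)) F))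

/-- A map `M_a(F) → M_b(F)` is standard (up to a permutation of the index set) if it is
`z ↦ diag(z, …, z)` (multiplicity `t`), suitably reindexed. -/
def IsStandardMatrixMap (F : Type*) [Field F] {a b : ℕ}
    (Φ : Matrix (Fin a) (Fin a) F → Matrix (Fin b) (Fin b) F) : Prop :=
  ∃ (t : ℕ) (E : Fin a × Fin t ≃ Fin b),
    ∀ z, Φ z = Matrix.reindex E E (Matrix.blockDiagonal fun _ : Fin t => z)

/-- A map between finite products of matrix algebras over `F` is standard (block diagonal,
up to a permutation of the index sets): it is determined by multiplicities `t j i`, the `j`-th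
component being the block-diagonal sum of `t j i` copies of the `i`-th component of the input. -/
def IsStandardBlockMap (F : Type*) [Field F] {k l : ℕ} (n : Fin (k + 1) → ℕ)
    (m : Fin (l + 1) → ℕ)
    (Φ : ((i : Fin (k + 1)) → Matrix (Fin (n i)) (Fin (n i)) F) →
      ((j : Fin (l + 1)) → Matrix (Fin (m j)) (Fin (m j)) F)) : Prop :=
  ∃ t : Fin (l + 1) → Fin (k + 1) → ℕ,
    ∃ E : (j : Fin (l + 1)) →
      ((Σ c : (Σ i : Fin (k + 1), Fin (t j i)), Fin (n c.1)) ≃ Fin (m j)),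
      ∀ z j, Φ z j =
        Matrix.reindex (E j) (E j)
          (Matrix.blockDiagonal' fun c : (Σ i : Fin (k + 1), Fin (t j i)) => z c.1)

end AraClaramunt

/-! In a `*`-regular ring `r*` lies in `(r* r) R`, so `N (r*) ≤ N (r* r) ≤ N r`; applying this to
`r*` as well gives equality. Properness enters through `d* d = 0` for `d = r - r y (r* r)`,
where `y` is a quasi-inverse of `r* r`. -/

namespace AraClaramunt

variable {R : Type*} [Ring R] [StarRing R]

theorem ProperStar.mul_mul_star_mul_self_eq (hproper : ProperStar R) {r y : R}
    (hy : star r * r * y * (star r * r) = star r * r) :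
    r * y * (star r * r) = r := by
  set s := star r * r with hs
  have hd : star (r - r * y * s) * (r - r * y * s) = 0 :=
    calc star (r - r * y * s) * (r - r * y * s)
        = s - s * y * s - s * star y * s + s * star y * (s * y * s) := by
          simp only [star_sub, star_mul, star_star, sub_mul, mul_sub, hs]
          noncomm_ring
      _ = 0 := by rw [hy]; abel
  exact (sub_eq_zero.mp (hproper _ hd)).symm

theorem VNRegular.exists_star_eq_star_mul_self_mul (hreg : VNRegular R)
    (hproper : ProperStar R) (r : R) : ∃ z : R, star r = star r * r * z := by
  obtain ⟨y, hy⟩ := hreg (star r * r)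
  refine ⟨star (r * y), ?_⟩
  conv_lhs => rw [← hproper.mul_mul_star_mul_self_eq hy.symm]
  simp only [star_mul, star_star, mul_assoc]

theorem IsPseudoRankFunction.map_star_le {N : R → ℝ} (hN : IsPseudoRankFunction N)
    (hreg : VNRegular R) (hproper : ProperStar R) (r : R) : N (star r) ≤ N r := by
  obtain ⟨z, hz⟩ := hreg.exists_star_eq_star_mul_self_mul hproper r
  calc N (star r) = N (star r * r * z) := by rw [← hz]
    _ ≤ N (star r * r) := hN.mul_le_left _ _
    _ ≤ N r := hN.mul_le_right _ _

/-- **Lemma 4.3(a)** (Ara–Claramunt). Any pseudo-rank function on a `*`-regular ring is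
isometric for the involution. -/
theorem statement7 (R : Type) [Ring R] [StarRing R]
    (hreg : VNRegular R) (hproper : ProperStar R)
    (N : R → ℝ) (hN : IsPseudoRankFunction N) :
    ∀ r : R, N (star r) = N r := fun r =>
  le_antisymm (hN.map_star_le hreg hproper r)
    (by simpa using hN.map_star_le hreg hproper (star r))

end AraClaramunt
end
end

section
/- Let N be a pseudo-rank function on a *-regular ring R, and suppose e_1, e_2, f_1, f_2 are projections in R such that f_1 is *-equivalent to f_2 and N(e_i - f_i) <= eps for i = 1, 2. Then there exist projections e_1' <= e_1 and e_2' <= e_2 such that e_1' is *-equivalent to e_2' and N(e_i - e_i') <= 5 eps for i = 1, 2. -/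
open scoped TensorProduct Kronecker

noncomputable section

/-! In a `*`-regular ring two projections `e, f` have a meet `e ∧ f`, and it lies within rank
distance `N (e - f)` of both. Write `f₁ = w w*`, `f₂ = w* w` and let `p = e₁ ∧ f₁`. Conjugating
by `w` gives a projection `q = w* p w ≤ f₂` with `N (e₂ - q) ≤ 2ε`. Then `r = e₂ ∧ q` and
`w r w* ≤ p ≤ e₁` are `*`-equivalent via `w r`, with `N (e₂ - r) ≤ 2ε` and
`N (e₁ - w r w*) ≤ N (e₁ - p) + N (q - r) ≤ 3ε`. -/

namespace AraClaramunt

section PseudoRank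

variable {R : Type*} [Ring R] {N : R → ℝ}

lemma IsPseudoRankFunction.map_neg_s10 (hN : IsPseudoRankFunction N) (x : R) : N (-x) = N x := by
  refine le_antisymm ?_ ?_
  · simpa using hN.mul_le_right (-1) x
  · simpa using hN.mul_le_right (-1) (-x)

lemma IsPseudoRankFunction.map_sub_rev (hN : IsPseudoRankFunction N) (x y : R) :
    N (x - y) = N (y - x) := by
  rw [← hN.map_neg_s10, neg_sub]

lemma IsPseudoRankFunction.map_sub_le_map_sub_add_map_sub (hN : IsPseudoRankFunction N)
    (x y z : R) : N (x - z) ≤ N (x - y) + N (y - z) := by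
  simpa using hN.subadditive (x - y) (y - z)

lemma IsPseudoRankFunction.map_mul_mul_le (hN : IsPseudoRankFunction N) (a x b : R) :
    N (a * x * b) ≤ N x :=
  (hN.mul_le_left _ _).trans (hN.mul_le_right _ _)

end PseudoRank

section ProjOrder

variable {R : Type*}

lemma ProjLE.antisymm [Mul R] {p q : R} (hpq : ProjLE p q) (hqp : ProjLE q p) : p = q :=
  hpq.1.symm.trans hqp.2

lemma ProjLE.trans [Semigroup R] {p q r : R} (hpq : ProjLE p q) (hqr : ProjLE q r) :
    ProjLE p r :=
  ⟨by rw [← hpq.1, ← mul_assoc, hqr.1], by rw [← hpq.2, mul_assoc, hqr.2]⟩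

lemma ProjLE.of_mul_eq [Mul R] [StarMul R] {p q : R} (hp : star p = p) (hq : star q = q)
    (h : p * q = p) : ProjLE p q :=
  ⟨by simpa only [star_mul, hp, hq] using congrArg star h, h⟩

lemma ProjLE.of_mul_eq' [Mul R] [StarMul R] {p q : R} (hp : star p = p) (hq : star q = q)
    (h : q * p = p) : ProjLE p q :=
  ⟨h, by simpa only [star_mul, hp, hq] using congrArg star h⟩

end ProjOrder

section StarRegular

variable {R : Type*} [Ring R] [StarRing R]

lemma ProperStar.mul_eq_zero_of_star_mul_self_mul_eq_zero (hp : ProperStar R) {x b : R}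
    (h : star x * x * b = 0) : x * b = 0 :=
  hp _ <| by rw [star_mul, mul_assoc, ← mul_assoc (star x), h, mul_zero]

/-- If `x = x y (x* x)` then `g = x y x*` satisfies `g* = g g*`, which is self-adjoint,
so `g` is a projection. -/
lemma exists_isLeftProjOf (hreg : VNRegular R) (hp : ProperStar R) (x : R) :
    ∃ g, IsLeftProjOf x g := by
  obtain ⟨y, hy⟩ := hreg (star x * x)
  have hx : x * y * star x * x = x := by
    have h : star x * x * (1 - y * (star x * x)) = 0 := by
      rw [mul_sub, mul_one, ← mul_assoc, ← hy, sub_self]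
    have := hp.mul_eq_zero_of_star_mul_self_mul_eq_zero h
    rw [mul_sub, mul_one, sub_eq_zero] at this
    simpa only [mul_assoc] using this.symm
  obtain ⟨g, hg⟩ : ∃ g, g = x * y * star x := ⟨_, rfl⟩
  rw [← hg] at hx
  have hgg : g * g = g := by
    calc g * g = (g * x) * (y * star x) := by rw [hg]; simp only [mul_assoc]
      _ = g := by rw [hx, hg, mul_assoc]
  have hgstar : star g = g * star g := by
    calc star g = x * star y * star x := by rw [hg]; simp only [star_mul, star_star, mul_assoc]
      _ = (g * x) * star y * star x := by rw [hx]
      _ = g * star g := by rw [hg]; simp only [star_mul, star_star, mul_assoc]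
  have hsa : g = star g :=
    calc g = star (g * star g) := by rw [← hgstar, star_star]
      _ = star g := by rw [star_mul, star_star, ← hgstar]
  exact ⟨g, ⟨hsa.symm, hgg⟩, hx, y * star x, by rw [hg, mul_assoc]⟩

/-- The greatest common subprojection of `e` and `f` is `e - LP(e (1 - f))`. -/
lemma exists_isGreatest_common_subprojection (hreg : VNRegular R) (hp : ProperStar R)
    {N : R → ℝ} (hN : IsPseudoRankFunction N) {e f : R}
    (he : IsProjection e) (hf : IsProjection f) :
    ∃ r, IsProjection r ∧ ProjLE r e ∧ ProjLE r f ∧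
      (∀ p, IsProjection p → ProjLE p e → ProjLE p f → ProjLE p r) ∧
      N (e - r) ≤ N (e - f) := by
  obtain ⟨g, ⟨hgs, hgg⟩, hgx, c, hg⟩ := exists_isLeftProjOf hreg hp (e * (1 - f))
  have heg : e * g = g := by rw [hg, ← mul_assoc, ← mul_assoc, he.2]
  have hge : g * e = g := (ProjLE.of_mul_eq' hgs he.1 heg).2
  have hrs : star (e - g) = e - g := by rw [star_sub, he.1, hgs]
  refine ⟨e - g, ⟨hrs, ?_⟩, ProjLE.of_mul_eq hrs he.1 ?_, ProjLE.of_mul_eq hrs hf.1 ?_, ?_, ?_⟩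
  · simp only [sub_mul, mul_sub, he.2, heg, hge, hgg]; abel
  · rw [sub_mul, he.2, hge]
  · have hg1f : g * (1 - f) = e * (1 - f) := by rw [← hge, mul_assoc, hgx]
    have h : (e - g) * (1 - f) = 0 := by rw [sub_mul, hg1f, sub_self]
    rwa [mul_sub, mul_one, sub_eq_zero, eq_comm] at h
  · intro p hp' hpe hpf
    have hpg : p * g = 0 := by
      rw [hg, ← mul_assoc, ← mul_assoc, hpe.2, mul_sub, mul_one, hpf.2, sub_self, zero_mul]
    exact ProjLE.of_mul_eq hp'.1 hrs (by rw [mul_sub, hpe.2, hpg, sub_zero])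
  · have h : e * (1 - f) = (e - f) * (1 - f) := by
      simp only [sub_mul, mul_sub, mul_one, hf.2]; abel
    calc N (e - (e - g)) = N (e * (1 - f) * c) := by rw [sub_sub_cancel, hg]
      _ ≤ N ((e - f) * (1 - f)) := h ▸ hN.mul_le_left _ _
      _ ≤ N (e - f) := hN.mul_le_left _ _

/-- The constructions for `(e, f)` and for `(f, e)` give the same projection `e ∧ f`. -/
lemma exists_common_subprojection_rank_le (hreg : VNRegular R) (hp : ProperStar R)
    {N : R → ℝ} (hN : IsPseudoRankFunction N) {e f : R}
    (he : IsProjection e) (hf : IsProjection f) :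
    ∃ r, IsProjection r ∧ ProjLE r e ∧ ProjLE r f ∧
      N (e - r) ≤ N (e - f) ∧ N (f - r) ≤ N (e - f) := by
  obtain ⟨r, hr, hre, hrf, hr_max, hNr⟩ :=
    exists_isGreatest_common_subprojection hreg hp hN he hf
  obtain ⟨r', hr', hr'f, hr'e, hr'_max, hNr'⟩ :=
    exists_isGreatest_common_subprojection hreg hp hN hf he
  obtain rfl : r = r' := (hr'_max r hr hrf hre).antisymm (hr_max r' hr' hr'e hr'f)
  exact ⟨r, hr, hre, hrf, hNr, hN.map_sub_rev e f ▸ hNr'⟩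

end StarRegular

section Conjugation

variable {R : Type*} [Ring R] [StarRing R] {w p r : R}

lemma isProjection_star_mul_mul (hp : IsProjection p) (hpw : ProjLE p (w * star w)) :
    IsProjection (star w * p * w) := by
  refine ⟨by simp only [star_mul, star_star, hp.1, mul_assoc], ?_⟩
  calc star w * p * w * (star w * p * w) = star w * (p * (w * star w) * p) * w := by
        simp only [mul_assoc]
    _ = star w * p * w := by rw [hpw.2, hp.2]

lemma projLE_star_mul_mul (hp : IsProjection p) (hpw : ProjLE p (w * star w)) :
    ProjLE (star w * p * w) (star w * w) := by
  refine ProjLE.of_mul_eq (isProjection_star_mul_mul hp hpw).1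
    (by simp only [star_mul, star_star]) ?_
  calc star w * p * w * (star w * w) = star w * (p * (w * star w)) * w := by
        simp only [mul_assoc]
    _ = star w * p * w := by rw [hpw.2]

lemma mul_star_mul_mul_mul_star (hpw : ProjLE p (w * star w)) :
    w * (star w * p * w) * star w = p := by
  calc w * (star w * p * w) * star w = w * star w * p * (w * star w) := by
        simp only [mul_assoc]
    _ = p := by rw [hpw.1, hpw.2]

lemma isProjection_mul_mul_star (hr : IsProjection r) (hrw : ProjLE r (star w * w)) :
    IsProjection (w * r * star w) := by
  refine ⟨by simp only [star_mul, star_star, hr.1, mul_assoc], ?_⟩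
  calc w * r * star w * (w * r * star w) = w * (r * (star w * w) * r) * star w := by
        simp only [mul_assoc]
    _ = w * r * star w := by rw [hrw.2, hr.2]

lemma starEquivProj_mul_mul_star (hr : IsProjection r) (hrw : ProjLE r (star w * w)) :
    StarEquivProj (w * r * star w) r := by
  refine ⟨w * r, ?_, ?_⟩
  · rw [star_mul, hr.1, ← mul_assoc, mul_assoc w r r, hr.2]
  · calc r = r * (star w * w) * r := by rw [hrw.2, hr.2]
      _ = star (w * r) * (w * r) := by simp only [star_mul, hr.1, mul_assoc]

lemma projLE_mul_mul_star (hp : IsProjection p) (hpw : ProjLE p (w * star w))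
    (hr : IsProjection r) (hrp : ProjLE r (star w * p * w)) : ProjLE (w * r * star w) p := by
  have hwr : p * (w * r) = w * r := by
    calc p * (w * r) = w * star w * p * (w * r) := by rw [hpw.1]
      _ = w * (star w * p * w * r) := by simp only [mul_assoc]
      _ = w * r := by rw [hrp.1]
  exact ProjLE.of_mul_eq' (isProjection_mul_mul_star hr
      (hrp.trans (projLE_star_mul_mul hp hpw))).1 hp.1 (by rw [← mul_assoc, hwr])

end Conjugation

/-- **Lemma 4.3(d)** (Ara–Claramunt). If `f₁ ∼* f₂` and `N (eᵢ - fᵢ) ≤ ε`, then there are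
subprojections `eᵢ' ≤ eᵢ` with `e₁' ∼* e₂'` and `N (eᵢ - eᵢ') ≤ 5 ε`. -/
theorem statement10 (R : Type) [Ring R] [StarRing R]
    (hreg : VNRegular R) (hproper : ProperStar R)
    (N : R → ℝ) (hN : IsPseudoRankFunction N)
    (e₁ e₂ f₁ f₂ : R)
    (he₁ : IsProjection e₁) (he₂ : IsProjection e₂)
    (hf₁ : IsProjection f₁) (hf₂ : IsProjection f₂)
    (hequiv : StarEquivProj f₁ f₂)
    (ε : ℝ) (h₁ : N (e₁ - f₁) ≤ ε) (h₂ : N (e₂ - f₂) ≤ ε) :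
    ∃ e₁' e₂' : R, IsProjection e₁' ∧ IsProjection e₂' ∧
      ProjLE e₁' e₁ ∧ ProjLE e₂' e₂ ∧ StarEquivProj e₁' e₂' ∧
      N (e₁ - e₁') ≤ 5 * ε ∧ N (e₂ - e₂') ≤ 5 * ε := by
  obtain ⟨w, rfl, rfl⟩ := hequiv
  have hε : 0 ≤ ε := (hN.nonneg _).trans h₁
  obtain ⟨p, hp, hpe₁, hpf₁, hNe₁p, hNf₁p⟩ :=
    exists_common_subprojection_rank_le hreg hproper hN he₁ hf₁
  have hq := isProjection_star_mul_mul hp hpf₁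
  have hNe₂q : N (e₂ - star w * p * w) ≤ 2 * ε := by
    have hf₂q : star w * w - star w * p * w = star w * (w * star w - p) * w := by
      rw [mul_sub, sub_mul, ← hf₂.2]; simp only [mul_assoc]
    have := hN.map_mul_mul_le (star w) (w * star w - p) w
    rw [← hf₂q] at this
    linarith [hN.map_sub_le_map_sub_add_map_sub e₂ (star w * w) (star w * p * w)]
  obtain ⟨r, hr, hre₂, hrq, hNe₂r, hNqr⟩ :=
    exists_common_subprojection_rank_le hreg hproper hN he₂ hq
  have hrf₂ : ProjLE r (star w * w) := hrq.trans (projLE_star_mul_mul hp hpf₁)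
  refine ⟨w * r * star w, r, isProjection_mul_mul_star hr hrf₂, hr,
    (projLE_mul_mul_star hp hpf₁ hr hrq).trans hpe₁, hre₂,
    starEquivProj_mul_mul_star hr hrf₂, ?_, by linarith⟩
  have hNpe₁' : N (p - w * r * star w) ≤ N (star w * p * w - r) := by
    conv_lhs => rw [← mul_star_mul_mul_mul_star hpf₁, ← sub_mul, ← mul_sub]
    exact hN.map_mul_mul_le _ _ _
  linarith [hN.map_sub_le_map_sub_add_map_sub e₁ p (w * r * star w)]

end AraClaramunt
end
end
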